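/- arXiv:math/0408061 — 5 statements merged into one kernel-verified Lean document; each statement's English description precedes it below -/
import Mathlib

section
/- Let A be a commutative associative unital k-algebra, σ: A → A an algebra homomorphism, Δ a σ-derivation of A with σ(Ann(Δ)) ⊆ Ann(Δ). Then the bracket on A·Δ defined by ⟨a·Δ, b·Δ⟩_σ = (σ(a)·Δ)∘(b·Δ) − (σ(b)·Δ)∘(a·Δ) is well-defined, k-bilinear, and satisfies ⟨a·Δ, b·Δ⟩_σ = (σ(a)Δ(b) − σ(b)Δ(a))·Δ. -/
/-- For a commutative associative unital `k`-algebra `A`, an algebra endomorphism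
`σ`, and a `σ`-derivation `Δ` with `σ(Ann Δ) ⊆ Ann Δ`, the bracket on `A·Δ`
defined by `⟨a·Δ, b·Δ⟩ = (σ(a)·Δ)∘(b·Δ) − (σ(b)·Δ)∘(a·Δ)` is well defined
(independent of the representatives `a, b`) and is given by the formula
`⟨a·Δ, b·Δ⟩ = (σ(a)Δ(b) − σ(b)Δ(a))·Δ`. -/
theorem stmt5 {k A : Type*} [Field k] [CharZero k] [CommRing A] [Algebra k A]
    (σ : A →ₐ[k] A) (Δ : A →ₗ[k] A)
    (hleib : ∀ a b : A, Δ (a * b) = Δ a * b + σ a * Δ b)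
    (hann : ∀ a : A, (∀ x : A, a * Δ x = 0) → (∀ x : A, σ a * Δ x = 0)) :
    -- well-definedness of the bracket on the cyclic module A·Δ
    (∀ a a' b b' : A, (∀ x : A, a * Δ x = a' * Δ x) → (∀ x : A, b * Δ x = b' * Δ x) →
      ∀ x : A, σ a * Δ (b * Δ x) - σ b * Δ (a * Δ x)
             = σ a' * Δ (b' * Δ x) - σ b' * Δ (a' * Δ x)) ∧
    -- the formula ⟨a·Δ, b·Δ⟩ = (σ(a)Δ(b) − σ(b)Δ(a))·Δ
    (∀ a b x : A, σ a * Δ (b * Δ x) - σ b * Δ (a * Δ x)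
       = (σ a * Δ b - σ b * Δ a) * Δ x) := by
  constructor
  · intro a a' b b' ha hb x
    have ha' : ∀ y, σ a * Δ y = σ a' * Δ y := by
      have h := hann (a - a') (fun y => by rw [sub_mul, ha y, sub_self])
      intro y
      have := h y
      rw [map_sub, sub_mul, sub_eq_zero] at this
      exact this
    have hb' : ∀ y, σ b * Δ y = σ b' * Δ y := by
      have h := hann (b - b') (fun y => by rw [sub_mul, hb y, sub_self])
      intro y
      have := h y
      rw [map_sub, sub_mul, sub_eq_zero] at this
      exact this
    rw [ha', hb x, hb', ha x]
  · intro a b x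
    rw [hleib b, hleib a]
    ring
end

section
/- Let A be a commutative associative unital k-algebra, σ an algebra endomorphism, Δ a σ-derivation with σ(Ann(Δ)) ⊆ Ann(Δ), and δ ∈ A with Δ(σ(a)) = δ·σ(Δ(a)) for all a ∈ A. Then the bracket ⟨a·Δ,b·Δ⟩_σ = (σ(a)Δ(b) − σ(b)Δ(a))·Δ satisfies the six-term deformed Jacobi identity: the cyclic sum over (a,b,c) of ⟨σ(a)·Δ, ⟨b·Δ, c·Δ⟩_σ⟩_σ + δ·⟨a·Δ, ⟨b·Δ, c·Δ⟩_σ⟩_σ equals 0. -/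
/-- The coefficient of the bracket `⟨a·Δ, b·Δ⟩_σ = (σ(a)Δ(b) − σ(b)Δ(a))·Δ`. -/
def sbr {k A : Type*} [Field k] [CommRing A] [Algebra k A]
    (σ : A →ₐ[k] A) (Δ : A →ₗ[k] A) (a b : A) : A :=
  σ a * Δ b - σ b * Δ a

/-- If moreover `Δ(σ(a)) = δ·σ(Δ(a))` for all `a`, then the bracket on `A·Δ`
satisfies the six-term deformed Jacobi identity: the cyclic sum over `(a,b,c)` of
`⟨σ(a)·Δ, ⟨b·Δ, c·Δ⟩⟩ + δ·⟨a·Δ, ⟨b·Δ, c·Δ⟩⟩` vanishes (as a map on `A`). -/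
theorem stmt7 {k A : Type*} [Field k] [CharZero k] [CommRing A] [Algebra k A]
    (σ : A →ₐ[k] A) (Δ : A →ₗ[k] A) (δ : A)
    (hleib : ∀ a b : A, Δ (a * b) = Δ a * b + σ a * Δ b)
    (hann : ∀ a : A, (∀ x : A, a * Δ x = 0) → (∀ x : A, σ a * Δ x = 0))
    (hδ : ∀ a : A, Δ (σ a) = δ * σ (Δ a)) :
    ∀ a b c x : A,
      (sbr σ Δ (σ a) (sbr σ Δ b c) + δ * sbr σ Δ a (sbr σ Δ b c)) * Δ x +
      (sbr σ Δ (σ b) (sbr σ Δ c a) + δ * sbr σ Δ b (sbr σ Δ c a)) * Δ x +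
      (sbr σ Δ (σ c) (sbr σ Δ a b) + δ * sbr σ Δ c (sbr σ Δ a b)) * Δ x = 0 := by
  have hP : ∀ u v : A, σ u * Δ v - σ v * Δ u = u * Δ v - v * Δ u := by
    intro u v
    have h1 := hleib u v
    have h2 := hleib v u
    rw [mul_comm v u] at h2
    linear_combination h2 - h1
  have hP1 : ∀ g v : A,
      σ (σ g) * Δ v - σ v * (δ * σ (Δ g)) = σ g * Δ v - v * (δ * σ (Δ g)) := by
    intro g v
    have := hP (σ g) v
    rwa [hδ] at this
  have hP2 : ∀ g h : A,
      σ (σ g) * (δ * σ (Δ h)) - σ (σ h) * (δ * σ (Δ g)) =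
        σ g * (δ * σ (Δ h)) - σ h * (δ * σ (Δ g)) := by
    intro g h
    have := hP (σ g) (σ h)
    rwa [hδ g, hδ h] at this
  intro a b c x
  simp only [sbr, map_sub, map_mul, hleib, hδ]
  linear_combination
      δ*(Δ x)*(σ c) * ((-1 : A) * hP1 b (Δ a)) +
      δ*(Δ x)*(σ c) * (hP1 a (Δ b)) +
      -(δ*(Δ x)*(σ (σ c)) * (hP a (Δ b))) +
      δ*(Δ x)*a * ((-1 : A) * hP1 c (Δ b)) +
      δ*(Δ x)*(σ c) * (hP a (Δ b)) +
      -(δ*(Δ x)*(σ b) * (hP1 a (Δ c))) +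
      δ*(Δ x)*(σ (σ b)) * (hP a (Δ c)) +
      δ*(Δ x)*a * (hP1 b (Δ c)) +
      -(δ*(Δ x)*(σ b) * (hP a (Δ c))) +
      δ*(Δ x)*(Δ c) * ((-1 : A) * hP1 b a) +
      -(δ*(Δ x)*(σ (Δ c)) * ((-1 : A) * hP1 b a)) +
      -(δ*(Δ x)*(σ b) * ((-1 : A) * hP1 c (Δ a))) +
      -(δ*(Δ x)*(Δ b) * ((-1 : A) * hP1 c a)) +
      δ*(Δ x)*(σ (Δ b)) * ((-1 : A) * hP1 c a)
end

section
/- Let A = k[t,t⁻¹], q ∈ k with q ≠ 0, 1, σ the algebra automorphism with σ(t) = qt, and D = (id − σ)/(1 − q), i.e. D(f)(t) = (f(t) − f(qt))/(1 − q). Set d_n = −tⁿD and define ⟨d_n, d_m⟩_σ = qⁿ d_n∘d_m − q^m d_m∘d_n. Then ⟨d_n, d_m⟩_σ = ({n}_q − {m}_q) d_{n+m}, where {n}_q = (qⁿ − 1)/(q − 1). -/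
noncomputable section

variable (k : Type*) [Field k]

/-- The q-integer `{n}_q = (qⁿ − 1)/(q − 1)` for `n : ℤ`. -/
def qint (q : k) (n : ℤ) : k := (q ^ n - 1) / (q - 1)

/-- Multiplication by `tⁿ` on `k[t,t⁻¹]`, realized as the space `ℤ →₀ k` of
finitely supported coefficient functions, with `tʲ = single j 1`. -/
def mulT (n : ℤ) : (ℤ →₀ k) →ₗ[k] (ℤ →₀ k) :=
  Finsupp.lsum k fun j => Finsupp.lsingle (n + j)

/-- The operator `D = (id − σ)/(1 − q)` where `σ(f)(t) = f(qt)`; on the basis,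
`D(tʲ) = {j}_q · tʲ`. -/
def Dop (q : k) : (ℤ →₀ k) →ₗ[k] (ℤ →₀ k) :=
  Finsupp.lsum k fun j => qint k q j • Finsupp.lsingle j

/-- The generator `d_n = −tⁿ D`. -/
def dgen (q : k) (n : ℤ) : (ℤ →₀ k) →ₗ[k] (ℤ →₀ k) :=
  -((mulT k n).comp (Dop k q))

lemma dgen_single (q : k) (n j : ℤ) :
    dgen k q n (Finsupp.single j 1) = -(qint k q j) • Finsupp.single (n + j) (1 : k) := by
  simp only [dgen, LinearMap.neg_apply, LinearMap.comp_apply, Dop, mulT,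
    Finsupp.lsum_single, LinearMap.smul_apply, Finsupp.lsingle_apply, map_smul,
    Finsupp.smul_single, smul_eq_mul, mul_one, neg_smul]

/-- For `A = k[t,t⁻¹]`, `σ(t) = qt` with `q ≠ 0, 1`, `D = (id−σ)/(1−q)` and
`d_n = −tⁿD`, the bracket `⟨d_n, d_m⟩ = qⁿ d_n∘d_m − q^m d_m∘d_n` satisfies
`⟨d_n, d_m⟩ = ({n}_q − {m}_q) d_{n+m}`. -/
theorem stmt8 (q : k) (hq0 : q ≠ 0) (hq1 : q ≠ 1) :
    ∀ n m : ℤ,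
      (q ^ n) • ((dgen k q n).comp (dgen k q m)) -
      (q ^ m) • ((dgen k q m).comp (dgen k q n)) =
      (qint k q n - qint k q m) • dgen k q (n + m) := by
  intro n m
  apply Finsupp.lhom_ext
  intro j x
  have hx : (Finsupp.single j x : ℤ →₀ k) = x • Finsupp.single j 1 := by
    rw [Finsupp.smul_single, smul_eq_mul, mul_one]
  rw [hx]
  simp only [map_smul, LinearMap.sub_apply, LinearMap.smul_apply, LinearMap.comp_apply,
    dgen_single, map_smul, smul_neg, map_neg, neg_smul, LinearMap.neg_apply, neg_neg]
  rw [show n + (m + j) = n + m + j by ring, show m + (n + j) = n + m + j by ring]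
  simp only [Finsupp.smul_single, smul_eq_mul, mul_one, ← Finsupp.single_sub, ← Finsupp.single_neg]
  congr 1
  have hq1' : q - 1 ≠ 0 := sub_ne_zero.mpr hq1
  simp only [qint]
  field_simp
  rw [zpow_add₀ hq0 m j, zpow_add₀ hq0 n j]
  ring

end
end

section
/- Let (g, ⟨·,·⟩_g, α_g, β_g, ω_g) be a quasi-hom-Lie algebra. Then the loop space ĝ = g ⊗ k[t,t⁻¹] with bracket ⟨x⊗tⁿ, y⊗t^m⟩ = ⟨x,y⟩_g ⊗ t^{n+m}, α = α_g ⊗ id, β = β_g ⊗ id, and ω(x⊗tⁿ, y⊗t^m) = ω_g(x,y) ⊗ id is a quasi-hom-Lie algebra. -/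
structure QhlAlgebra (k : Type*) (L : Type*) [Field k] [CharZero k]
    [AddCommGroup L] [Module k L] where
  bracket : L →ₗ[k] L →ₗ[k] L
  α : L →ₗ[k] L
  β : L →ₗ[k] L
  Dom : Set (L × L)
  ω : L → L → (L →ₗ[k] L)
  twist : ∀ x y : L, bracket (α x) (α y) = β (α (bracket x y))
  omega_symm : ∀ x y : L, (x, y) ∈ Dom → bracket x y = ω x y (bracket y x)
  jacobi : ∀ x y z : L, (z, x) ∈ Dom → (x, y) ∈ Dom → (y, z) ∈ Dom →
    ω z x (bracket (α x) (bracket y z) + β (bracket x (bracket y z))) +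
    ω x y (bracket (α y) (bracket z x) + β (bracket y (bracket z x))) +
    ω y z (bracket (α z) (bracket x y) + β (bracket z (bracket x y))) = 0

open TensorProduct LaurentPolynomial

/-!
The axioms of a quasi-hom-Lie algebra are multilinear, so on pure tensors `x ⊗ a` the axioms
for `L ⊗ A` are those of `L` tensored with a product of the `a`'s, which by commutativity of `A`
is the same in every term. The only subtlety is `ω`, which has to read off `x` from `x ⊗ a`: we
contract with a linear functional `ε` on `A` and restrict the domain to tensors `x ⊗ a` with
`ε a = 1`. For `k[t,t⁻¹]`, `ε` is evaluation at `t = 1`, which is `1` on every monomial `tⁿ`.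
-/

namespace QhlAlgebra

variable {k L A : Type*} [Field k] [AddCommGroup L] [Module k L] [CommSemiring A] [Algebra k A]

noncomputable def contract (ε : A →ₗ[k] k) : L ⊗[k] A →ₗ[k] L :=
  TensorProduct.rid k L ∘ₗ LinearMap.lTensor L ε

@[simp]
lemma contract_tmul (ε : A →ₗ[k] k) (x : L) (a : A) : contract ε (x ⊗ₜ[k] a) = ε a • x := by
  simp [contract]

noncomputable def currentBracket (B : L →ₗ[k] L →ₗ[k] L) :
    L ⊗[k] A →ₗ[k] L ⊗[k] A →ₗ[k] L ⊗[k] A :=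
  TensorProduct.map₂ B (LinearMap.mul k A)

@[simp]
lemma currentBracket_tmul (B : L →ₗ[k] L →ₗ[k] L) (x y : L) (a b : A) :
    currentBracket B (x ⊗ₜ[k] a) (y ⊗ₜ[k] b) = B x y ⊗ₜ[k] (a * b) := by
  simp [currentBracket]

lemma currentBracket_twist {B : L →ₗ[k] L →ₗ[k] L} {α β : L →ₗ[k] L}
    (h : ∀ x y, B (α x) (α y) = β (α (B x y))) (u v : L ⊗[k] A) :
    currentBracket B (map α LinearMap.id u) (map α LinearMap.id v) =
      map β LinearMap.id (map α LinearMap.id (currentBracket B u v)) := by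
  have : (currentBracket B).compl₁₂ (map α LinearMap.id) (map α LinearMap.id) =
      (currentBracket B).compr₂ (map β LinearMap.id ∘ₗ map α (LinearMap.id : A →ₗ[k] A)) :=
    TensorProduct.ext' fun x a => TensorProduct.ext' fun y b => by simp [h]
  exact congr($this u v)

def monomialTensors (ε : A →ₗ[k] k) : Set (L ⊗[k] A) :=
  {u | ∃ (x : L) (a : A), ε a = 1 ∧ x ⊗ₜ[k] a = u}

noncomputable def current [CharZero k] (Q : QhlAlgebra k L) (ε : A →ₗ[k] k) :
    QhlAlgebra k (L ⊗[k] A) where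
  bracket := currentBracket Q.bracket
  α := map Q.α LinearMap.id
  β := map Q.β LinearMap.id
  Dom := {p | p.1 ∈ monomialTensors ε ∧ p.2 ∈ monomialTensors ε ∧
    (contract ε p.1, contract ε p.2) ∈ Q.Dom}
  ω u v := map (Q.ω (contract ε u) (contract ε v)) LinearMap.id
  twist := currentBracket_twist Q.twist
  omega_symm := by
    rintro _ _ ⟨⟨x, a, ha, rfl⟩, ⟨y, b, hb, rfl⟩, hxy⟩
    simp only [contract_tmul, ha, hb, one_smul] at hxy ⊢
    simp [← Q.omega_symm x y hxy, mul_comm]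
  jacobi := by
    rintro _ _ _ ⟨⟨z, c, hc, rfl⟩, ⟨x, a, ha, rfl⟩, hzx⟩ ⟨-, ⟨y, b, hb, rfl⟩, hxy⟩ ⟨-, -, hyz⟩
    simp only [contract_tmul, ha, hb, hc, one_smul, map_tmul, currentBracket_tmul,
      LinearMap.id_apply] at hzx hxy hyz ⊢
    obtain ⟨hbca, hcab⟩ : b * (c * a) = a * (b * c) ∧ c * (a * b) = a * (b * c) :=
      ⟨by ring, by ring⟩
    rw [hbca, hcab]
    simpa only [add_tmul, map_add, map_tmul, LinearMap.id_apply, zero_tmul] using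
      congr($(Q.jacobi x y z hzx hxy hyz) ⊗ₜ[k] (a * (b * c)))

end QhlAlgebra

/-- The loop algebra `ĝ = g ⊗ k[t,t⁻¹]` of a quasi-hom-Lie algebra `g`, with
bracket `⟨x⊗tⁿ, y⊗t^m⟩ = ⟨x,y⟩⊗t^{n+m}`, `α = α_g ⊗ id`, `β = β_g ⊗ id` and
`ω(x⊗tⁿ, y⊗t^m) = ω_g(x,y) ⊗ id`, is again a quasi-hom-Lie algebra. -/
theorem stmt11 {k L : Type*} [Field k] [CharZero k] [AddCommGroup L] [Module k L]
    (Q : QhlAlgebra k L) :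
    ∃ Q' : QhlAlgebra k (L ⊗[k] LaurentPolynomial k),
      (∀ (x y : L) (n m : ℤ),
        Q'.bracket (x ⊗ₜ[k] T n) (y ⊗ₜ[k] T m) = Q.bracket x y ⊗ₜ[k] T (n + m)) ∧
      Q'.α = TensorProduct.map Q.α LinearMap.id ∧
      Q'.β = TensorProduct.map Q.β LinearMap.id ∧
      (∀ (x y : L) (n m : ℤ), (x, y) ∈ Q.Dom →
        (x ⊗ₜ[k] T n, y ⊗ₜ[k] T m) ∈ Q'.Dom ∧
        Q'.ω (x ⊗ₜ[k] T n) (y ⊗ₜ[k] T m) = TensorProduct.map (Q.ω x y) LinearMap.id) := by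
  let ε : LaurentPolynomial k →ₗ[k] k := (AddMonoidAlgebra.lift k k ℤ 1).toLinearMap
  have hε (n : ℤ) : ε (T n) = 1 := by
    simp only [ε, AlgHom.toLinearMap_apply, T]
    rw [AddMonoidAlgebra.lift_single, MonoidHom.one_apply, one_smul]
  have hT (x : L) (n : ℤ) : x ⊗ₜ[k] T n ∈ QhlAlgebra.monomialTensors ε := ⟨x, T n, hε n, rfl⟩
  refine ⟨Q.current ε, fun x y n m => ?_, rfl, rfl, fun x y n m hxy => ?_⟩
  · rw [T_add]
    exact QhlAlgebra.currentBracket_tmul Q.bracket x y (T n) (T m)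
  · refine ⟨⟨hT x n, hT y m, ?_⟩, ?_⟩ <;> simp [QhlAlgebra.current, hε, hxy]
end

section
/- Let 0 → a → E → L → 0 be a central extension of quasi-hom-Lie algebras with a abelian, s: L → E a section with pr∘s = id_L intertwining ω_E and ω_L. Define g: L×L → a by ι∘g(x,y) = ⟨s(x),s(y)⟩_E − s(⟨x,y⟩_L). Then g satisfies the generalized skew-symmetry ι∘g(x,y) = ω_E(s(x),s(y))∘ι∘g(y,x) for all (x,y) in the domain of ω_L with (s(x),s(y)) in the domain of ω_E. -/
/-- In a central extension `0 → a → E → L → 0` of quasi-hom-Lie algebras with `a`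
abelian and a section `s` intertwining `ω_E` and `ω_L`, the 2-cocycle-like map
`g` defined by `ι∘g(x,y) = ⟨s x, s y⟩_E − s⟨x,y⟩_L` satisfies the generalized
skew-symmetry `ι∘g(x,y) = ω_E(s x, s y)(ι∘g(y,x))`. -/
theorem stmt12 {k A E L : Type*} [Field k] [CharZero k]
    [AddCommGroup A] [Module k A] [AddCommGroup E] [Module k E]
    [AddCommGroup L] [Module k L]
    (Qa : QhlAlgebra k A) (QE : QhlAlgebra k E) (QL : QhlAlgebra k L)
    (ι : A →ₗ[k] E) (pr : E →ₗ[k] L)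
    (hinj : Function.Injective ι) (hsurj : Function.Surjective pr)
    (hexact : LinearMap.ker pr = LinearMap.range ι)
    (hιbr : ∀ u v : A, ι (Qa.bracket u v) = QE.bracket (ι u) (ι v))
    (hprbr : ∀ e e' : E, pr (QE.bracket e e') = QL.bracket (pr e) (pr e'))
    (hcentral : ∀ (v : A) (e : E), QE.bracket (ι v) e = 0)
    (habelian : ∀ u v : A, Qa.bracket u v = 0)
    (s : L →ₗ[k] E) (hs : ∀ x : L, pr (s x) = x)
    (hintertwine : ∀ (x y : L) (va vb : A), (x, y) ∈ QL.Dom →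
      (s x + ι va, s y + ι vb) ∈ QE.Dom →
      ∀ l : L, QE.ω (s x + ι va) (s y + ι vb) (s l) = s (QL.ω x y l))
    (g : L → L → A)
    (hg : ∀ x y : L, ι (g x y) = QE.bracket (s x) (s y) - s (QL.bracket x y)) :
    ∀ x y : L, (x, y) ∈ QL.Dom → (s x, s y) ∈ QE.Dom →
      ι (g x y) = QE.ω (s x) (s y) (ι (g y x)) := by
  intro x y hxy hE
  have hint : ∀ l : L, QE.ω (s x) (s y) (s l) = s (QL.ω x y l) := by
    intro l
    have := hintertwine x y 0 0 hxy (by simpa using hE) l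
    simpa using this
  have h1 : QE.bracket (s x) (s y) = QE.ω (s x) (s y) (QE.bracket (s y) (s x)) :=
    QE.omega_symm _ _ hE
  have h2 : QL.bracket x y = QL.ω x y (QL.bracket y x) := QL.omega_symm _ _ hxy
  have h3 : QE.bracket (s y) (s x) = ι (g y x) + s (QL.bracket y x) := by
    rw [hg y x]; abel
  rw [hg, h1, h3, map_add, hint, ← h2]
  abel
end
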